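/- For a crossing edge (u,v) in a rooted tree with w = LCA(u,v) and beta = min(depth(u),depth(v)) - depth(w), the coverage relation restricted to crossing edges is characterized by: a crossing edge (x,y) is covered by (u,v) if and only if LCA(x,y) = w and each of x, y is within distance beta of u or of v (with x and y covered by different endpoints). -/
import Mathlib


/-- A finite rooted tree, given by a parent function. `depth v` is the number of
edges on the path from the root to `v`. -/
structure RTree (V : Type*) where
  root : V
  parent : V → V
  parent_root : parent root = root
  depth : V → ℕ
  depth_root : depth root = 0
  depth_parent : ∀ v, v ≠ root → depth v = depth (parent v) + 1
  reaches_root : ∀ v, ∃ k, parent^[k] v = root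

namespace RTree

variable {V : Type*}

/-- `a` is an ancestor of `b` (every vertex is an ancestor of itself). -/
def Ancestor (T : RTree V) (a b : V) : Prop := ∃ k, T.parent^[k] b = a

/-- Tree-path distance: graph distance in the undirected tree. -/
noncomputable def dist (T : RTree V) (a b : V) : ℕ :=
  (SimpleGraph.fromRel (fun x y => T.parent x = y ∧ x ≠ y)).dist a b

/-- `w` is the lowest common ancestor of `u` and `v`. -/
def IsLCA (T : RTree V) (w u v : V) : Prop :=
  T.Ancestor w u ∧ T.Ancestor w v ∧
    ∀ d, T.Ancestor d u → T.Ancestor d v → T.depth d ≤ T.depth w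

/-- `(u,v)` is a crossing edge: neither endpoint is an ancestor of the other. -/
def Crossing (T : RTree V) (u v : V) : Prop :=
  ¬ T.Ancestor u v ∧ ¬ T.Ancestor v u

/-- `c` is a child of `w`. -/
def IsChildOf (T : RTree V) (c w : V) : Prop := T.parent c = w ∧ c ≠ w

/-- Edge `(x,y)` is covered by edge `(u,v)` with radius `beta`. -/
def Covers (T : RTree V) (beta : ℕ) (u v x y : V) : Prop :=
  (T.dist u x ≤ beta ∧ T.dist v y ≤ beta) ∨ (T.dist u y ≤ beta ∧ T.dist v x ≤ beta)

/-- The underlying undirected graph of the tree. -/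
def G (T : RTree V) : SimpleGraph V :=
  SimpleGraph.fromRel (fun x y => T.parent x = y ∧ x ≠ y)

lemma parent_eq_self (T : RTree V) {z : V} (h : T.parent z = z) : z = T.root := by
  obtain ⟨k, hk⟩ := T.reaches_root z
  rw [Function.iterate_fixed h] at hk
  exact hk

lemma depth_parent_le (T : RTree V) (z : V) : T.depth (T.parent z) ≤ T.depth z := by
  by_cases h : z = T.root
  · subst h; rw [T.parent_root]
  · rw [T.depth_parent z h]; omega

lemma ancestor_refl (T : RTree V) (a : V) : T.Ancestor a a := ⟨0, rfl⟩

lemma ancestor_trans (T : RTree V) {a b c : V} (h1 : T.Ancestor a b) (h2 : T.Ancestor b c) :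
    T.Ancestor a c := by
  obtain ⟨j, hj⟩ := h1
  obtain ⟨k, hk⟩ := h2
  exact ⟨j + k, by rw [Function.iterate_add_apply, hk, hj]⟩

lemma depth_iterate_le (T : RTree V) (k : ℕ) (z : V) :
    T.depth (T.parent^[k] z) ≤ T.depth z := by
  induction k with
  | zero => simp
  | succ n ih =>
    rw [Function.iterate_succ_apply']
    exact (T.depth_parent_le _).trans ih

lemma depth_le_of_ancestor (T : RTree V) {a b : V} (h : T.Ancestor a b) :
    T.depth a ≤ T.depth b := by
  obtain ⟨k, hk⟩ := h
  rw [← hk]; exact T.depth_iterate_le k b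

lemma iterate_eq_of_depth_eq (T : RTree V) (k : ℕ) :
    ∀ z : V, T.depth (T.parent^[k] z) = T.depth z → T.parent^[k] z = z := by
  induction k with
  | zero => simp
  | succ n ih =>
    intro z hz
    by_cases hr : z = T.root
    · subst hr
      rw [Function.iterate_succ_apply, T.parent_root] at *
      exact ih _ hz
    · exfalso
      rw [Function.iterate_succ_apply] at hz
      have h1 := T.depth_iterate_le n (T.parent z)
      have h2 := T.depth_parent z hr
      omega

lemma eq_of_ancestor_depth_eq (T : RTree V) {a b : V} (h : T.Ancestor a b)
    (hd : T.depth a = T.depth b) : a = b := by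
  obtain ⟨k, hk⟩ := h
  have := T.iterate_eq_of_depth_eq k b (by rw [hk, hd])
  rw [← hk, this]

lemma ancestor_comparable (T : RTree V) {d e z : V} (h1 : T.Ancestor d z) (h2 : T.Ancestor e z) :
    T.Ancestor d e ∨ T.Ancestor e d := by
  obtain ⟨j, hj⟩ := h1
  obtain ⟨k, hk⟩ := h2
  rcases le_total j k with h | h
  · right
    refine ⟨k - j, ?_⟩
    rw [← hj, ← Function.iterate_add_apply]
    rw [Nat.sub_add_cancel h, hk]
  · left
    refine ⟨j - k, ?_⟩
    rw [← hk, ← Function.iterate_add_apply]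
    rw [Nat.sub_add_cancel h, hj]

lemma exists_child (T : RTree V) [DecidableEq V] {w a : V} (h : T.Ancestor w a) (hne : a ≠ w) :
    ∃ c, T.IsChildOf c w ∧ T.Ancestor c a := by
  have hP : ∃ k, T.parent^[k] a = w := h
  classical
  let k0 := Nat.find hP
  have hk0 : T.parent^[k0] a = w := Nat.find_spec hP
  have hk0pos : k0 ≠ 0 := by
    intro h0
    apply hne
    simpa [h0] using hk0
  obtain ⟨m, hm⟩ : ∃ m, k0 = m + 1 := ⟨k0 - 1, by omega⟩
  have hk0' : T.parent^[m + 1] a = w := by rw [← hm]; exact hk0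
  rw [Function.iterate_succ_apply'] at hk0'
  refine ⟨T.parent^[m] a, ⟨hk0', ?_⟩, ⟨m, rfl⟩⟩
  · intro hc
    have := Nat.find_min hP (m := m) (by omega)
    exact this hc

lemma depth_child (T : RTree V) {c w : V} (hc : T.IsChildOf c w) :
    T.depth c = T.depth w + 1 := by
  have hcr : c ≠ T.root := by
    intro h
    subst h
    exact hc.2 (by rw [← hc.1, T.parent_root])
  rw [T.depth_parent c hcr, hc.1]

lemma adj_cases (T : RTree V) {a b : V} (h : (T.G).Adj a b) :
    a ≠ b ∧ (T.parent a = b ∨ T.parent b = a) := by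
  rw [G, SimpleGraph.fromRel_adj] at h
  exact ⟨h.1, h.2.elim (fun h' => Or.inl h'.1) (fun h' => Or.inr h'.1)⟩

lemma reachable_root (T : RTree V) (z : V) : (T.G).Reachable z T.root := by
  obtain ⟨k, hk⟩ := T.reaches_root z
  induction k generalizing z with
  | zero => rw [show z = T.root from hk]
  | succ n ih =>
    by_cases hr : z = T.root
    · rw [hr]
    · have hadj : (T.G).Adj z (T.parent z) := by
        rw [G, SimpleGraph.fromRel_adj]
        have : z ≠ T.parent z := fun h => hr (T.parent_eq_self h.symm)
        exact ⟨this, Or.inl ⟨rfl, this⟩⟩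
      exact hadj.reachable.trans (ih (T.parent z) (by rwa [← Function.iterate_succ_apply]))

lemma reachable (T : RTree V) (a b : V) : (T.G).Reachable a b :=
  (T.reachable_root a).trans (T.reachable_root b).symm

lemma walk_stay (T : RTree V) {w c : V} (hc : T.IsChildOf c w) :
    ∀ {a z : V} (p : (T.G).Walk a z), T.Ancestor c a →
      p.length ≤ T.depth a - T.depth w → T.Ancestor c z ∨ z = w := by
  intro a z p
  induction p with
  | nil => intro h _; exact Or.inl h
  | @cons a b z hab p ih =>
    intro hca hlen
    rw [SimpleGraph.Walk.length_cons] at hlen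
    have hdc : T.depth c = T.depth w + 1 := T.depth_child hc
    have hdca : T.depth c ≤ T.depth a := T.depth_le_of_ancestor hca
    obtain ⟨hne, hor⟩ := T.adj_cases hab
    rcases hor with hpa | hpb
    · -- parent a = b
      by_cases hac : a = c
      · -- then b = w and walk must end immediately
        have hbw : b = w := by rw [← hpa, hac, hc.1]
        have hlen0 : p.length = 0 := by
          have : T.depth a = T.depth w + 1 := by rw [hac, hdc]
          omega
        right
        rw [← hbw]
        exact (SimpleGraph.Walk.eq_of_length_eq_zero hlen0).symm
      · obtain ⟨k, hk⟩ := hca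
        have hkpos : k ≠ 0 := by
          intro h0; apply hac; simpa [h0] using hk
        obtain ⟨m, hm⟩ : ∃ m, k = m + 1 := ⟨k - 1, by omega⟩
        have hcb : T.Ancestor c b := by
          have hk' : T.parent^[m + 1] a = c := by rw [← hm]; exact hk
          rw [Function.iterate_succ_apply] at hk'
          exact ⟨m, by rw [← hpa]; exact hk'⟩
        have har : a ≠ T.root := by
          intro h; apply hne; rw [← hpa, h, T.parent_root]
        have hdab : T.depth a = T.depth b + 1 := by
          rw [T.depth_parent a har, hpa]
        have hcbd : T.depth c ≤ T.depth b := T.depth_le_of_ancestor hcb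
        exact ih hcb (by omega)
    · -- parent b = a
      have hcb : T.Ancestor c b := by
        obtain ⟨k, hk⟩ := hca
        exact ⟨k + 1, by rw [Function.iterate_succ_apply, hpb, hk]⟩
      have hbr : b ≠ T.root := by
        intro h; apply hne; rw [← hpb, h, T.parent_root]
      have hdab : T.depth b = T.depth a + 1 := by
        rw [T.depth_parent b hbr, hpb]
      exact ih hcb (by omega)

lemma dist_stay (T : RTree V) {w c a z : V} (hc : T.IsChildOf c w) (hca : T.Ancestor c a)
    (hd : T.dist a z ≤ T.depth a - T.depth w) : T.Ancestor c z ∨ z = w := by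
  obtain ⟨p, hp⟩ := (T.reachable a z).exists_walk_length_eq_dist
  exact T.walk_stay hc p hca (by rw [hp]; exact hd)

end RTree

lemma stmt18_aux {V : Type*} [Fintype V] [DecidableEq V] (T : RTree V)
    (u v w x y : V)
    (hcross : T.Crossing u v) (hlca : T.IsLCA w u v)
    (beta : ℕ) (hbeta : beta = min (T.depth u) (T.depth v) - T.depth w)
    (hxy : x ≠ y) (hcxy : T.Crossing x y)
    (h1 : T.dist u x ≤ beta) (h2 : T.dist v y ≤ beta) : T.IsLCA w x y := by
  obtain ⟨hwu, hwv, hmax⟩ := hlca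
  have huw : u ≠ w := fun h => hcross.1 (h ▸ hwv)
  have hvw : v ≠ w := fun h => hcross.2 (h ▸ hwu)
  obtain ⟨cu, hcu, hcuu⟩ := T.exists_child hwu huw
  obtain ⟨cv, hcv, hcvv⟩ := T.exists_child hwv hvw
  have hcne : cu ≠ cv := by
    intro h
    have := hmax cu hcuu (h ▸ hcvv)
    have := T.depth_child hcu
    omega
  have hdwu : T.depth w ≤ T.depth u := T.depth_le_of_ancestor hwu
  have hdwv : T.depth w ≤ T.depth v := T.depth_le_of_ancestor hwv
  have hb1 : beta ≤ T.depth u - T.depth w := by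
    rw [hbeta]; exact Nat.sub_le_sub_right (min_le_left _ _) _
  have hb2 : beta ≤ T.depth v - T.depth w := by
    rw [hbeta]; exact Nat.sub_le_sub_right (min_le_right _ _) _
  have hx := T.dist_stay hcu hcuu (h1.trans hb1)
  have hy := T.dist_stay hcv hcvv (h2.trans hb2)
  -- x ≠ w and y ≠ w
  have hwcu : T.Ancestor w cu := ⟨1, by simpa using hcu.1⟩
  have hwcv : T.Ancestor w cv := ⟨1, by simpa using hcv.1⟩
  have hxne : x ≠ w := by
    intro h
    subst h
    rcases hy with hy | hy
    · exact hcxy.1 (T.ancestor_trans hwcv hy)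
    · exact hxy hy.symm
  have hax : T.Ancestor cu x := hx.resolve_right hxne
  have hyne : y ≠ w := by
    intro h
    subst h
    exact hcxy.2 (T.ancestor_trans hwcu hax)
  have hay : T.Ancestor cv y := hy.resolve_right hyne
  have hwx : T.Ancestor w x := T.ancestor_trans hwcu hax
  have hwy : T.Ancestor w y := T.ancestor_trans hwcv hay
  refine ⟨hwx, hwy, fun d hdx hdy => ?_⟩
  rcases T.ancestor_comparable hdx hwx with hdw | hwd
  · exact T.depth_le_of_ancestor hdw
  · by_cases hdweq : d = w
    · rw [hdweq]
    · exfalso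
      obtain ⟨c, hcw, hcd⟩ := T.exists_child hwd hdweq
      have hcx : T.Ancestor c x := T.ancestor_trans hcd hdx
      have hcy : T.Ancestor c y := T.ancestor_trans hcd hdy
      have hdceq : T.depth c = T.depth cu := by
        rw [T.depth_child hcw, T.depth_child hcu]
      have hccu : c = cu := by
        rcases T.ancestor_comparable hcx hax with h | h
        · exact T.eq_of_ancestor_depth_eq h hdceq
        · exact (T.eq_of_ancestor_depth_eq h hdceq.symm).symm
      have hdceq' : T.depth c = T.depth cv := by
        rw [T.depth_child hcw, T.depth_child hcv]
      have hccv : c = cv := by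
        rcases T.ancestor_comparable hcy hay with h | h
        · exact T.eq_of_ancestor_depth_eq h hdceq'
        · exact (T.eq_of_ancestor_depth_eq h hdceq'.symm).symm
      exact hcne (hccu ▸ hccv)

/-- Characterization of coverage among crossing edges: a crossing edge `(x,y)`
is covered by the crossing edge `(u,v)` (with `w = LCA(u,v)` and
`beta = min(depth u, depth v) - depth w`) iff `LCA(x,y) = w` and each of
`x`, `y` is within distance `beta` of a different endpoint of `(u,v)`. -/
theorem stmt18 {V : Type*} [Fintype V] [DecidableEq V] (T : RTree V)
    (u v w x y : V)
    (hcross : T.Crossing u v) (hlca : T.IsLCA w u v)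
    (beta : ℕ) (hbeta : beta = min (T.depth u) (T.depth v) - T.depth w)
    (hxy : x ≠ y) (hcxy : T.Crossing x y) :
    T.Covers beta u v x y ↔
      (T.IsLCA w x y ∧
        ((T.dist u x ≤ beta ∧ T.dist v y ≤ beta) ∨
          (T.dist u y ≤ beta ∧ T.dist v x ≤ beta))) := by
  constructor
  · intro hcov
    refine ⟨?_, hcov⟩
    rcases hcov with ⟨h1, h2⟩ | ⟨h1, h2⟩
    · exact stmt18_aux T u v w x y hcross hlca beta hbeta hxy hcxy h1 h2
    · have := stmt18_aux T u v w y x hcross hlca beta hbeta hxy.symm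
        ⟨hcxy.2, hcxy.1⟩ h1 h2
      exact ⟨this.2.1, this.1, fun d hdx hdy => this.2.2 d hdy hdx⟩
  · intro h
    exact h.2
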